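/- arXiv:1812.01530 — 3 statements merged into one kernel-verified Lean document; each statement's English description precedes it below -/
import Mathlib

section
/- Let X be a normal topological space, A a closed subset of a locally finite closed cover 𝒜 of X, and define U = X \ ⋃ { ⋂_{i∈I} A_i : I finite, (⋂_{i∈I} A_i) ∩ A = ∅, ⋂_{i∈I} A_i ≠ ∅ }. Then U is an open neighborhood of A, and replacing A by any closed neighborhood B of A with B ⊆ U yields a cover with the same nerve as 𝒜. -/
/-!
The union of the finite intersections `A_I` that are nonempty and miss `A i₀` is closed, because
the family of all finite intersections of a locally finite family is again locally finite; hence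
`U` is open, and it contains `A i₀` by construction. Enlarging `A i₀` to `B` can only create new
simplices `I ∋ i₀` with `B ∩ A_{I \ i₀} ≠ ∅ = A i₀ ∩ A_{I \ i₀}`, and such an intersection
`A_{I \ i₀}` is one of those removed from `U`, so it cannot meet `B ⊆ U`.
-/

open Set Function

section

variable {ι X : Type*}

theorem LocallyFinite.biInter_finset [TopologicalSpace X] {A : ι → Set X}
    (hA : LocallyFinite A) : LocallyFinite fun I : Finset ι => ⋂ i ∈ I, A i := by
  intro x
  obtain ⟨V, hV, hfin⟩ := hA x
  refine ⟨V, hV, (hfin.finite_subsets.preimage Finset.coe_injective.injOn).subset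
    fun I hI i hi => ?_⟩
  obtain ⟨y, hyI, hyV⟩ := hI
  exact ⟨y, mem_iInter₂.mp hyI i hi, hyV⟩

theorem isClosed_biUnion_biInter_finset [TopologicalSpace X] {A : ι → Set X}
    (hA : LocallyFinite A) (hclosed : ∀ i, IsClosed (A i)) (S : Set (Finset ι)) :
    IsClosed (⋃ I ∈ S, ⋂ i ∈ I, A i) := by
  rw [biUnion_eq_iUnion]
  exact (hA.biInter_finset.comp_injective Subtype.val_injective).isClosed_iUnion
    fun I => isClosed_biInter fun i _ => hclosed i

def nonemptyInterDisjointFrom (A : ι → Set X) (C : Set X) : Set (Finset ι) :=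
  {I | (⋂ i ∈ I, A i).Nonempty ∧ (⋂ i ∈ I, A i) ∩ C = ∅}

theorem subset_compl_biUnion_nonemptyInterDisjointFrom (A : ι → Set X) (C : Set X) :
    C ⊆ (⋃ I ∈ nonemptyInterDisjointFrom A C, ⋂ i ∈ I, A i)ᶜ := by
  intro x hxC hx
  obtain ⟨I, hI, hxI⟩ := mem_iUnion₂.mp hx
  exact eq_empty_iff_forall_notMem.mp hI.2 x ⟨hxI, hxC⟩

theorem inter_biInter_nonempty_of_subset_compl {A : ι → Set X} {C B : Set X}
    (hB : B ⊆ (⋃ I ∈ nonemptyInterDisjointFrom A C, ⋂ i ∈ I, A i)ᶜ) {J : Finset ι}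
    (hJ : (B ∩ ⋂ i ∈ J, A i).Nonempty) : (C ∩ ⋂ i ∈ J, A i).Nonempty := by
  obtain ⟨x, hxB, hxJ⟩ := hJ
  by_contra hempty
  have hJbad : J ∈ nonemptyInterDisjointFrom A C :=
    ⟨⟨x, hxJ⟩, by rwa [inter_comm, ← not_nonempty_iff_eq_empty]⟩
  exact hB hxB (mem_biUnion hJbad hxJ)

section Update

variable [DecidableEq ι] {A : ι → Set X} {i₀ : ι} {B : Set X}

theorem biInter_update_of_mem {I : Finset ι} (h : i₀ ∈ I) :
    ⋂ i ∈ I, update A i₀ B i = B ∩ ⋂ i ∈ I.erase i₀, A i := by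
  conv_lhs => rw [← Finset.insert_erase h]
  exact Finset.set_biInter_insert_update A (Finset.notMem_erase i₀ I)

theorem biInter_update_of_notMem {I : Finset ι} (h : i₀ ∉ I) :
    ⋂ i ∈ I, update A i₀ B i = ⋂ i ∈ I, A i :=
  iInter₂_congr fun _ hi => update_of_ne (ne_of_mem_of_not_mem hi h) _ _

theorem iUnion_update_eq_univ (hcover : ⋃ i, A i = univ) (hAB : A i₀ ⊆ B) :
    ⋃ i, update A i₀ B i = univ :=
  eq_univ_of_univ_subset <| hcover ▸ iUnion_mono (le_update_self_iff.mpr hAB)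

theorem biInter_update_nonempty_iff (hAB : A i₀ ⊆ B)
    (hB : ∀ J : Finset ι, (B ∩ ⋂ i ∈ J, A i).Nonempty → (A i₀ ∩ ⋂ i ∈ J, A i).Nonempty)
    (I : Finset ι) : (⋂ i ∈ I, update A i₀ B i).Nonempty ↔ (⋂ i ∈ I, A i).Nonempty := by
  by_cases h : i₀ ∈ I
  · have hA : ⋂ i ∈ I, A i = A i₀ ∩ ⋂ i ∈ I.erase i₀, A i := by
      simpa only [update_eq_self] using biInter_update_of_mem (A := A) (B := A i₀) h
    rw [biInter_update_of_mem h, hA]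
    exact ⟨hB _, fun hne => hne.mono (inter_subset_inter_left _ hAB)⟩
  · rw [biInter_update_of_notMem h]

end Update

end

theorem stmt3_general {ι : Type*} [DecidableEq ι] {X : Type*} [TopologicalSpace X]
    (A : ι → Set X) (hclosed : ∀ i, IsClosed (A i))
    (hcover : ⋃ i, A i = Set.univ) (hlf : LocallyFinite A) (i₀ : ι)
    (U : Set X)
    (hU : U = (⋃ I ∈ {I : Finset ι | (⋂ i ∈ I, A i).Nonempty ∧ (⋂ i ∈ I, A i) ∩ A i₀ = ∅},
        ⋂ i ∈ I, A i)ᶜ) :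
    IsOpen U ∧ A i₀ ⊆ U ∧
      ∀ B : Set X, IsClosed B → A i₀ ⊆ interior B → B ⊆ U →
        (⋃ i, Function.update A i₀ B i = Set.univ) ∧
        ∀ I : Finset ι,
          (⋂ i ∈ I, Function.update A i₀ B i).Nonempty ↔ (⋂ i ∈ I, A i).Nonempty := by
  change U = (⋃ I ∈ nonemptyInterDisjointFrom A (A i₀), ⋂ i ∈ I, A i)ᶜ at hU
  subst hU
  refine ⟨(isClosed_biUnion_biInter_finset hlf hclosed _).isOpen_compl,
    subset_compl_biUnion_nonemptyInterDisjointFrom A (A i₀), fun B _ hAB hBU => ?_⟩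
  have hAB : A i₀ ⊆ B := hAB.trans interior_subset
  exact ⟨iUnion_update_eq_univ hcover hAB, biInter_update_nonempty_iff hAB
    fun _ => inter_biInter_nonempty_of_subset_compl hBU⟩

/-- For a locally finite closed cover `A` of a normal space and a member `A i₀`,
the set `U = X \ ⋃ {A_I : I finite, A_I ≠ ∅, A_I ∩ A i₀ = ∅}` is an open
neighborhood of `A i₀`, and replacing `A i₀` by any closed neighborhood `B ⊆ U`
of it yields a cover with the same nerve. -/
theorem stmt3 {ι : Type*} [DecidableEq ι] {X : Type*} [TopologicalSpace X] [NormalSpace X]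
    (A : ι → Set X) (hclosed : ∀ i, IsClosed (A i))
    (hcover : ⋃ i, A i = Set.univ) (hlf : LocallyFinite A) (i₀ : ι)
    (U : Set X)
    (hU : U = (⋃ I ∈ {I : Finset ι | (⋂ i ∈ I, A i).Nonempty ∧ (⋂ i ∈ I, A i) ∩ A i₀ = ∅},
        ⋂ i ∈ I, A i)ᶜ) :
    IsOpen U ∧ A i₀ ⊆ U ∧
      ∀ B : Set X, IsClosed B → A i₀ ⊆ interior B → B ⊆ U →
        (⋃ i, Function.update A i₀ B i = Set.univ) ∧
        ∀ I : Finset ι,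
          (⋂ i ∈ I, Function.update A i₀ B i).Nonempty ↔ (⋂ i ∈ I, A i).Nonempty :=
  stmt3_general A hclosed hcover hlf i₀ U hU
end

section
/- Let X be a paracompact Hausdorff space, let A, B ⊆ X be closed with A ⊆ interior(B) and B of finite covering dimension, and let W ⊆ A be open in X. Then any family 𝒰 of open subsets of X covering X \ W can be refined by a locally finite open family 𝒜 covering X \ W such that the subfamily of members of 𝒜 meeting A has order at most dim B + 1. -/
/-!
Apply the dimension of `B` to the open cover `𝒰 ∪ {W}` of `B`, obtaining a refinement `𝒲` of
order at most `n + 1` on `B`. Trimmed to `interior B`, the members of `𝒲` that lie in some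
`U ∈ 𝒰`, together with the sets `U \ A` for `U ∈ 𝒰`, form an open refinement of `𝒰` covering
`X \ W`; the sets `U \ A` miss `A`, so the members meeting `A` all come from `𝒲` and have order at
most `n + 1`. Paracompactness then shrinks this family to a locally finite one, and shrinking
can only decrease the order of the subfamily meeting `A`.
-/

open Set Topology

section

variable {X : Type*}

theorem encard_range_meeting_le_of_subset {𝒜 : Set (Set X)} {v : 𝒜 → Set X}
    (hv : ∀ D, v D ⊆ D) (A : Set X) (x : X) :
    {C | C ∈ range v ∧ (C ∩ A).Nonempty ∧ x ∈ C}.encard ≤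
      {D | D ∈ 𝒜 ∧ (D ∩ A).Nonempty ∧ x ∈ D}.encard :=
  calc {C | C ∈ range v ∧ (C ∩ A).Nonempty ∧ x ∈ C}.encard
      ≤ (v '' {D : 𝒜 | ((D : Set X) ∩ A).Nonempty ∧ x ∈ (D : Set X)}).encard := by
        refine encard_mono ?_
        rintro _ ⟨⟨D, rfl⟩, hmeet, hx⟩
        exact ⟨D, ⟨hmeet.mono (inter_subset_inter_left A (hv D)), hv D hx⟩, rfl⟩
    _ ≤ {D : 𝒜 | ((D : Set X) ∩ A).Nonempty ∧ x ∈ (D : Set X)}.encard := encard_image_le _ _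
    _ = (Subtype.val '' {D : 𝒜 | ((D : Set X) ∩ A).Nonempty ∧ x ∈ (D : Set X)}).encard :=
        (Subtype.val_injective.encard_image _).symm
    _ ≤ {D | D ∈ 𝒜 ∧ (D ∩ A).Nonempty ∧ x ∈ D}.encard := by
        refine encard_mono ?_
        rintro _ ⟨D, hD, rfl⟩
        exact ⟨D.2, hD⟩

variable [TopologicalSpace X]

theorem exists_open_refinement_encard_meeting_le {A V W : Set X} (hA : IsClosed A)
    (hV : IsOpen V) (hAV : A ⊆ V) {𝒰 : Set (Set X)} (h𝒰open : ∀ U ∈ 𝒰, IsOpen U)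
    (h𝒰cover : univ \ W ⊆ ⋃₀ 𝒰) {𝒲 : Set (Set X)} (h𝒲open : ∀ S ∈ 𝒲, IsOpen S)
    (h𝒲cover : A \ W ⊆ ⋃₀ 𝒲) (h𝒲ref : ∀ S ∈ 𝒲, ∃ U ∈ insert W 𝒰, S ⊆ U) {k : ℕ∞}
    (h𝒲ord : ∀ x ∈ V, {S | S ∈ 𝒲 ∧ x ∈ S}.encard ≤ k) :
    ∃ 𝒜 : Set (Set X), (∀ C ∈ 𝒜, IsOpen C) ∧ univ \ W ⊆ ⋃₀ 𝒜 ∧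
      (∀ C ∈ 𝒜, ∃ U ∈ 𝒰, C ⊆ U) ∧
      ∀ x : X, {C | C ∈ 𝒜 ∧ (C ∩ A).Nonempty ∧ x ∈ C}.encard ≤ k := by
  refine ⟨(· ∩ V) '' {S | S ∈ 𝒲 ∧ ∃ U ∈ 𝒰, S ⊆ U} ∪ (· \ A) '' 𝒰, ?_, ?_, ?_, ?_⟩
  · rintro C (⟨S, ⟨hS, -⟩, rfl⟩ | ⟨U, hU, rfl⟩)
    · exact (h𝒲open S hS).inter hV
    · exact (h𝒰open U hU).sdiff hA
  · rintro x ⟨-, hxW⟩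
    by_cases hxA : x ∈ A
    · obtain ⟨S, hS, hxS⟩ := h𝒲cover ⟨hxA, hxW⟩
      obtain ⟨U, hU, hSU⟩ := h𝒲ref S hS
      obtain rfl | hU := mem_insert_iff.1 hU
      · exact absurd (hSU hxS) hxW
      · exact ⟨S ∩ V, Or.inl ⟨S, ⟨hS, U, hU, hSU⟩, rfl⟩, hxS, hAV hxA⟩
    · obtain ⟨U, hU, hxU⟩ := h𝒰cover ⟨trivial, hxW⟩
      exact ⟨U \ A, Or.inr ⟨U, hU, rfl⟩, hxU, hxA⟩
  · rintro C (⟨S, ⟨-, U, hU, hSU⟩, rfl⟩ | ⟨U, hU, rfl⟩)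
    · exact ⟨U, hU, inter_subset_left.trans hSU⟩
    · exact ⟨U, hU, sdiff_subset⟩
  · intro x
    have hsub : {C | C ∈ (· ∩ V) '' {S | S ∈ 𝒲 ∧ ∃ U ∈ 𝒰, S ⊆ U} ∪ (· \ A) '' 𝒰 ∧
        (C ∩ A).Nonempty ∧ x ∈ C} ⊆ (· ∩ V) '' {S | S ∈ 𝒲 ∧ x ∈ S ∧ x ∈ V} := by
      rintro C ⟨⟨S, ⟨hS, -⟩, rfl⟩ | ⟨U, -, rfl⟩, ⟨a, ha, haA⟩, hxC⟩
      · exact ⟨S, ⟨hS, hxC⟩, rfl⟩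
      · exact absurd haA ha.2
    refine (encard_mono hsub).trans ((encard_image_le _ _).trans ?_)
    by_cases hxV : x ∈ V
    · simpa only [hxV, and_true] using h𝒲ord x hxV
    · simp only [hxV, and_false, ofPred_false, encard_empty, zero_le]

theorem LocallyFinite.exists_mem_nhds_finite_range_meeting {ι : Type*} {f : ι → Set X}
    (hf : LocallyFinite f) (x : X) :
    ∃ N ∈ 𝓝 x, {C | C ∈ range f ∧ (C ∩ N).Nonempty}.Finite := by
  obtain ⟨N, hN, hfin⟩ := hf x
  refine ⟨N, hN, (hfin.image f).subset ?_⟩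
  rintro _ ⟨⟨i, rfl⟩, hi⟩
  exact ⟨i, hi, rfl⟩

end

theorem stmt6_general {X : Type*} [TopologicalSpace X] [ParacompactSpace X]
    (A B : Set X) (hA : IsClosed A) (hAB : A ⊆ interior B)
    (n : ℕ)
    (hdimB : ∀ 𝒱 : Set (Set X), (∀ V ∈ 𝒱, IsOpen V) → B ⊆ ⋃₀ 𝒱 →
      ∃ 𝒲 : Set (Set X), (∀ W' ∈ 𝒲, IsOpen W') ∧ B ⊆ ⋃₀ 𝒲 ∧
        (∀ W' ∈ 𝒲, ∃ V ∈ 𝒱, W' ⊆ V) ∧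
        ∀ x ∈ B, {W' | W' ∈ 𝒲 ∧ x ∈ W'}.encard ≤ (n + 1 : ℕ))
    (W : Set X) (hW : IsOpen W)
    (𝒰 : Set (Set X)) (h𝒰open : ∀ U ∈ 𝒰, IsOpen U) (h𝒰cover : Set.univ \ W ⊆ ⋃₀ 𝒰) :
    ∃ 𝒜 : Set (Set X), (∀ C ∈ 𝒜, IsOpen C) ∧ Set.univ \ W ⊆ ⋃₀ 𝒜 ∧
      (∀ C ∈ 𝒜, ∃ U ∈ 𝒰, C ⊆ U) ∧
      (∀ x : X, ∃ N ∈ nhds x, {C | C ∈ 𝒜 ∧ (C ∩ N).Nonempty}.Finite) ∧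
      ∀ x : X, {C | C ∈ 𝒜 ∧ (C ∩ A).Nonempty ∧ x ∈ C}.encard ≤ (n + 1 : ℕ) := by
  have hinsert_open : ∀ V ∈ insert W 𝒰, IsOpen V := by
    rintro V (rfl | hV)
    exacts [hW, h𝒰open V hV]
  have hinsert_cover : B ⊆ ⋃₀ insert W 𝒰 := by
    rw [sUnion_insert, ← sdiff_subset_iff]
    exact (sdiff_subset_sdiff_left (subset_univ B)).trans h𝒰cover
  obtain ⟨𝒲, h𝒲open, h𝒲cover, h𝒲ref, h𝒲ord⟩ := hdimB _ hinsert_open hinsert_cover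
  obtain ⟨𝒜, h𝒜open, h𝒜cover, h𝒜ref, h𝒜ord⟩ :=
    exists_open_refinement_encard_meeting_le hA isOpen_interior hAB h𝒰open h𝒰cover h𝒲open
      (fun x hx => h𝒲cover (interior_subset (hAB hx.1))) h𝒲ref
      (fun x hx => h𝒲ord x (interior_subset hx))
  obtain ⟨v, hvopen, hvcover, hvlf, hvsub⟩ :=
    precise_refinement_set (isClosed_univ.sdiff hW) (Subtype.val : 𝒜 → Set X)
      (fun D => h𝒜open D D.2) (by rwa [← sUnion_eq_iUnion])
  refine ⟨range v, forall_mem_range.2 hvopen, by rwa [sUnion_range], ?_,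
    hvlf.exists_mem_nhds_finite_range_meeting,
    fun x => (encard_range_meeting_le_of_subset hvsub A x).trans (h𝒜ord x)⟩
  rintro _ ⟨D, rfl⟩
  obtain ⟨U, hU, hDU⟩ := h𝒜ref D D.2
  exact ⟨U, hU, (hvsub D).trans hDU⟩

/-- Let `X` be paracompact Hausdorff, `A ⊆ interior B` closed sets with `B` of
covering dimension at most `n`, and `W ⊆ A` open. Then any open family covering
`X \ W` can be refined by a locally finite open family covering `X \ W` whose
subfamily of members meeting `A` has order at most `n + 1`. -/
theorem stmt6 {X : Type*} [TopologicalSpace X] [ParacompactSpace X] [T2Space X]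
    (A B : Set X) (hA : IsClosed A) (hB : IsClosed B) (hAB : A ⊆ interior B)
    (n : ℕ)
    (hdimB : ∀ 𝒱 : Set (Set X), (∀ V ∈ 𝒱, IsOpen V) → B ⊆ ⋃₀ 𝒱 →
      ∃ 𝒲 : Set (Set X), (∀ W' ∈ 𝒲, IsOpen W') ∧ B ⊆ ⋃₀ 𝒲 ∧
        (∀ W' ∈ 𝒲, ∃ V ∈ 𝒱, W' ⊆ V) ∧
        ∀ x ∈ B, {W' | W' ∈ 𝒲 ∧ x ∈ W'}.encard ≤ (n + 1 : ℕ))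
    (W : Set X) (hW : IsOpen W) (hWA : W ⊆ A)
    (𝒰 : Set (Set X)) (h𝒰open : ∀ U ∈ 𝒰, IsOpen U) (h𝒰cover : Set.univ \ W ⊆ ⋃₀ 𝒰) :
    ∃ 𝒜 : Set (Set X), (∀ C ∈ 𝒜, IsOpen C) ∧ Set.univ \ W ⊆ ⋃₀ 𝒜 ∧
      (∀ C ∈ 𝒜, ∃ U ∈ 𝒰, C ⊆ U) ∧
      (∀ x : X, ∃ N ∈ nhds x, {C | C ∈ 𝒜 ∧ (C ∩ N).Nonempty}.Finite) ∧
      ∀ x : X, {C | C ∈ 𝒜 ∧ (C ∩ A).Nonempty ∧ x ∈ C}.encard ≤ (n + 1 : ℕ) :=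
  stmt6_general A B hA hAB n hdimB W hW 𝒰 h𝒰open h𝒰cover
end

section
/- Let X be a topological space, 𝒱 = {V_i}_{i∈J} a locally finite open cover of X, and 𝒮 = {S_i}_{i∈J} a shrinking of 𝒱 (meaning closure(S_i) ⊆ V_i for all i). Then for every point x ∈ X there is an open neighborhood W of x such that for every finite I ⊆ J, if W ∩ (⋂_{i∈I} S_i) ≠ ∅ then W ⊆ ⋂_{i∈I} V_i. -/
/-! A neighbourhood of `x` that meets `S i` also meets `closure (S i)`; by local finiteness of the
closed sets `closure (S i)` it can be chosen to meet only those that contain `x`, and by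
point-finiteness it can be chosen inside the finitely many `V i` containing those closures. -/

open Filter Set Topology

namespace LocallyFinite

variable {X ι : Type*} [TopologicalSpace X] {S V : ι → Set X}

theorem eventually_forall_mem_of_mem_closure (hS : LocallyFinite S) (hV : ∀ i, IsOpen (V i))
    (hSV : ∀ i, closure (S i) ⊆ V i) (x : X) :
    ∀ᶠ y in 𝓝 x, ∀ i, x ∈ closure (S i) → y ∈ V i := by
  have hfin : {i | x ∈ closure (S i)}.Finite := hS.closure.point_finite x
  exact (eventually_all_finite hfin).2 fun i hi => (hV i).mem_nhds (hSV i hi)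

theorem exists_isOpen_subset_of_inter_nonempty (hS : LocallyFinite S)
    (hV : ∀ i, IsOpen (V i)) (hSV : ∀ i, closure (S i) ⊆ V i) (x : X) :
    ∃ W, IsOpen W ∧ x ∈ W ∧ ∀ i, (W ∩ S i).Nonempty → W ⊆ V i := by
  obtain ⟨W, hW, hWo, hxW⟩ := eventually_nhds_iff.1 <|
    (hS.closure.eventually_subset (fun _ => isClosed_closure) x).and
      (hS.eventually_forall_mem_of_mem_closure hV hSV x)
  refine ⟨W, hWo, hxW, fun i ⟨y, hyW, hyS⟩ z hzW => ?_⟩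
  have hx : x ∈ closure (S i) := (hW y hyW).1 (subset_closure hyS)
  exact (hW z hzW).2 i hx

end LocallyFinite

theorem stmt7_general {X : Type*} [TopologicalSpace X] {ι : Type*}
    (V S : ι → Set X)
    (hVopen : ∀ i, IsOpen (V i)) (hVlf : LocallyFinite V)
    (hshr : ∀ i, closure (S i) ⊆ V i) :
    ∀ x : X, ∃ W : Set X, IsOpen W ∧ x ∈ W ∧
      ∀ I : Finset ι, (W ∩ ⋂ i ∈ I, S i).Nonempty → W ⊆ ⋂ i ∈ I, V i := by
  intro x
  have hSlf : LocallyFinite S := hVlf.subset fun i => subset_closure.trans (hshr i)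
  obtain ⟨W, hWo, hxW, hW⟩ := hSlf.exists_isOpen_subset_of_inter_nonempty hVopen hshr x
  refine ⟨W, hWo, hxW, fun I ⟨y, hyW, hyS⟩ => subset_iInter₂ fun i hi => hW i ?_⟩
  exact ⟨y, hyW, mem_iInter₂.1 hyS i hi⟩

/-- Let `V` be a locally finite open cover of `X` and `S` a shrinking of `V`.
Then every point `x` has an open neighborhood `W` such that `W ⊆ ⋂_{i ∈ I} V i`
whenever `W` meets `⋂_{i ∈ I} S i`, for every finite `I`. -/
theorem stmt7 {X : Type*} [TopologicalSpace X] {ι : Type*}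
    (V S : ι → Set X)
    (hVopen : ∀ i, IsOpen (V i)) (hVcover : ⋃ i, V i = Set.univ) (hVlf : LocallyFinite V)
    (hSopen : ∀ i, IsOpen (S i)) (hScover : ⋃ i, S i = Set.univ)
    (hshr : ∀ i, closure (S i) ⊆ V i) :
    ∀ x : X, ∃ W : Set X, IsOpen W ∧ x ∈ W ∧
      ∀ I : Finset ι, (W ∩ ⋂ i ∈ I, S i).Nonempty → W ⊆ ⋂ i ∈ I, V i :=
  stmt7_general V S hVopen hVlf hshr
end
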